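/- arXiv:1606.05453 — 2 statements merged into one kernel-verified Lean document; each statement's English description precedes it below -/
import Mathlib

section
/- The Voronoi cell of the lattice Λ at the origin, K = {x ∈ ℝ³ : ‖x‖ ≤ ‖x − λ‖ for all λ ∈ Λ}, equals the truncated octahedron {x ∈ ℝ³ : |x1| ≤ √2, |x2| ≤ √2, |x3| ≤ √2, and |x1|+|x2|+|x3| ≤ 3√2/2}. -/
noncomputable section

def lam1 : EuclideanSpace ℝ (Fin 3) := Real.sqrt 2 • WithLp.toLp 2 (![1, -1, -1] : Fin 3 → ℝ)
def lam2 : EuclideanSpace ℝ (Fin 3) := Real.sqrt 2 • WithLp.toLp 2 (![-1, 1, -1] : Fin 3 → ℝ)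
def lam3 : EuclideanSpace ℝ (Fin 3) := Real.sqrt 2 • WithLp.toLp 2 (![-1, -1, 1] : Fin 3 → ℝ)

/-- The additive subgroup Λ of ℝ³ generated by λ1, λ2, λ3. -/
def Lambda : AddSubgroup (EuclideanSpace ℝ (Fin 3)) :=
  AddSubgroup.closure {lam1, lam2, lam3}

/-!
Λ is √2 times the lattice of integer vectors `v` whose coordinates all have the same parity,
and for `y = √2 x` the condition `‖x‖ ≤ ‖x - √2 v‖` reads `∑ yᵢ vᵢ ≤ ∑ vᵢ²`. Testing it on the
lattice vectors `±2eᵢ` and `(±1, ±1, ±1)` gives `|yᵢ| ≤ 2` and `∑ |yᵢ| ≤ 3`. Conversely, these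
bounds give the inequality termwise for an even `v`, since `2|k| ≤ k²` for even `k`; for an odd
`v` they give `|yᵢ| |vᵢ| ≤ |yᵢ| + vᵢ² - 1`, and summing uses `∑ |yᵢ| ≤ 3` once.
-/

open Finset

theorem norm_le_norm_sub_iff {E : Type*} [NormedAddCommGroup E] [InnerProductSpace ℝ E]
    (x l : E) : ‖x‖ ≤ ‖x - l‖ ↔ 2 * inner ℝ x l ≤ ‖l‖ ^ 2 := by
  rw [← sq_le_sq₀ (norm_nonneg x) (norm_nonneg _), norm_sub_sq_real]
  constructor <;> intro h <;> linarith

theorem sqrt_two_mul_le_iff {a c : ℝ} : Real.sqrt 2 * a ≤ c ↔ a ≤ c * Real.sqrt 2 / 2 := by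
  rw [mul_div_assoc, Real.sqrt_div_self, ← div_eq_mul_inv, le_div_iff₀' (by positivity)]

theorem two_mul_abs_le_sq_of_even {k : ℤ} (hk : Even k) : 2 * |k| ≤ k ^ 2 := by
  obtain ⟨m, rfl⟩ := hk
  rcases eq_or_ne m 0 with rfl | hm
  · simp
  have := Int.one_le_abs hm
  rw [← sq_abs, ← two_mul, abs_mul]
  norm_num
  nlinarith

theorem mul_abs_le_sq_of_even {t : ℝ} (ht₀ : 0 ≤ t) (ht : t ≤ 2) {k : ℤ} (hk : Even k) :
    t * |(k : ℝ)| ≤ (k : ℝ) ^ 2 := by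
  have : 2 * |(k : ℝ)| ≤ (k : ℝ) ^ 2 := by exact_mod_cast two_mul_abs_le_sq_of_even hk
  nlinarith [abs_nonneg (k : ℝ)]

theorem mul_abs_le_of_odd {t : ℝ} (ht : t ≤ 2) {k : ℤ} (hk : Odd k) :
    t * |(k : ℝ)| ≤ t + (k : ℝ) ^ 2 - 1 := by
  have hk₁ : (1 : ℝ) ≤ |(k : ℝ)| := by
    exact_mod_cast Int.one_le_abs (by rintro rfl; exact Int.not_odd_zero hk)
  rw [← sq_abs]
  nlinarith [sq_nonneg (|(k : ℝ)| - 1)]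

def sameParityLattice (ι : Type*) : AddSubgroup (ι → ℤ) where
  carrier := {v | ∀ i j, v i ≡ v j [ZMOD 2]}
  add_mem' ha hb i j := (ha i j).add (hb i j)
  zero_mem' _ _ := rfl
  neg_mem' ha i j := (ha i j).neg

theorem mem_sameParityLattice {ι : Type*} {v : ι → ℤ} :
    v ∈ sameParityLattice ι ↔ ∀ i j, v i ≡ v j [ZMOD 2] := Iff.rfl

section SameParity

variable {ι : Type*} [Fintype ι]

theorem sum_mul_le_sum_sq_of_mem_sameParityLattice {y : ι → ℝ} (hy : ∀ i, |y i| ≤ 2)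
    (hsum : ∑ i, |y i| ≤ Fintype.card ι) {v : ι → ℤ} (hv : v ∈ sameParityLattice ι) :
    ∑ i, y i * v i ≤ ∑ i, (v i : ℝ) ^ 2 := by
  have habs : ∑ i, y i * v i ≤ ∑ i, |y i| * |(v i : ℝ)| :=
    sum_le_sum fun i _ => (le_abs_self _).trans (abs_mul _ _).le
  refine habs.trans ?_
  by_cases heven : ∀ i, Even (v i)
  · exact sum_le_sum fun i _ => mul_abs_le_sq_of_even (abs_nonneg _) (hy i) (heven i)
  obtain ⟨j, hj⟩ := not_forall.1 heven
  have hodd (i : ι) : Odd (v i) :=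
    Int.odd_iff.2 (Eq.trans (hv i j) (Int.odd_iff.1 (Int.not_even_iff_odd.1 hj)))
  calc ∑ i, |y i| * |(v i : ℝ)| ≤ ∑ i, (|y i| + (v i : ℝ) ^ 2 - 1) :=
        sum_le_sum fun i _ => mul_abs_le_of_odd (hy i) (hodd i)
    _ = ∑ i, |y i| + ∑ i, (v i : ℝ) ^ 2 - Fintype.card ι := by
        simp [sum_sub_distrib, sum_add_distrib]
    _ ≤ ∑ i, (v i : ℝ) ^ 2 := by linarith

theorem abs_le_two_of_forall_sum_mul_le [DecidableEq ι] {y : ι → ℝ}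
    (h : ∀ v ∈ sameParityLattice ι, ∑ i, y i * v i ≤ ∑ i, (v i : ℝ) ^ 2) (i : ι) :
    |y i| ≤ 2 := by
  have hsingle (s : ℤ) : y i * (2 * s) ≤ (2 * s) ^ 2 := by
    have := h (Pi.single i (2 * s)) fun j k => by
      simp only [Pi.single_apply]
      split_ifs <;> simp [Int.ModEq]
    simpa [Pi.single_apply, apply_ite (Int.cast : ℤ → ℝ)] using this
  have h₁ := hsingle 1
  have h₂ := hsingle (-1)
  push_cast at h₁ h₂
  exact abs_le.2 ⟨by linarith, by linarith⟩

theorem sum_abs_le_card_of_forall_sum_mul_le {y : ι → ℝ}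
    (h : ∀ v ∈ sameParityLattice ι, ∑ i, y i * v i ≤ ∑ i, (v i : ℝ) ^ 2) :
    ∑ i, |y i| ≤ Fintype.card ι := by
  have := h (fun i => if 0 ≤ y i then 1 else -1) fun i j => by
    dsimp only
    split_ifs <;> decide
  convert this using 2 with i
  · split_ifs with hi
    · simp [abs_of_nonneg hi]
    · simp [abs_of_neg (not_le.1 hi)]
  · simp

theorem forall_sum_mul_le_sum_sq_iff (y : ι → ℝ) :
    (∀ v ∈ sameParityLattice ι, ∑ i, y i * v i ≤ ∑ i, (v i : ℝ) ^ 2) ↔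
      (∀ i, |y i| ≤ 2) ∧ ∑ i, |y i| ≤ Fintype.card ι := by
  classical
  exact ⟨fun h => ⟨abs_le_two_of_forall_sum_mul_le h, sum_abs_le_card_of_forall_sum_mul_le h⟩,
    fun h _ hv => sum_mul_le_sum_sq_of_mem_sameParityLattice h.1 h.2 hv⟩

end SameParity

def sqrtTwoSMulCast (ι : Type*) : (ι → ℤ) →+ EuclideanSpace ℝ ι :=
  AddMonoidHom.mk' (fun v => Real.sqrt 2 • WithLp.toLp 2 fun i => (v i : ℝ)) fun v w => by
    ext i
    simp [mul_add]

@[simp]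
theorem sqrtTwoSMulCast_apply {ι : Type*} (v : ι → ℤ) (i : ι) :
    sqrtTwoSMulCast ι v i = Real.sqrt 2 * v i := rfl

theorem norm_le_norm_sub_sqrtTwoSMulCast_iff {ι : Type*} [Fintype ι] (x : EuclideanSpace ℝ ι)
    (v : ι → ℤ) :
    ‖x‖ ≤ ‖x - sqrtTwoSMulCast ι v‖ ↔ ∑ i, Real.sqrt 2 * x i * v i ≤ ∑ i, (v i : ℝ) ^ 2 := by
  rw [norm_le_norm_sub_iff, EuclideanSpace.real_norm_sq_eq, PiLp.inner_apply]
  simp only [sqrtTwoSMulCast_apply, mul_pow, Real.sq_sqrt zero_le_two, ← mul_sum,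
    RCLike.inner_apply, conj_trivial]
  have hsum : ∑ i, Real.sqrt 2 * v i * x i = ∑ i, Real.sqrt 2 * x i * v i :=
    sum_congr rfl fun i _ => by ring
  rw [hsum]
  constructor <;> intro h <;> linarith

theorem Lambda_eq_map_sameParityLattice :
    Lambda = (sameParityLattice (Fin 3)).map (sqrtTwoSMulCast (Fin 3)) := by
  apply le_antisymm
  · rw [Lambda, AddSubgroup.closure_le]
    rintro _ (rfl | rfl | rfl)
    · exact ⟨![1, -1, -1], mem_sameParityLattice.2 (by decide),
        by ext i; fin_cases i <;> simp [lam1]⟩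
    · exact ⟨![-1, 1, -1], mem_sameParityLattice.2 (by decide),
        by ext i; fin_cases i <;> simp [lam2]⟩
    · exact ⟨![-1, -1, 1], mem_sameParityLattice.2 (by decide),
        by ext i; fin_cases i <;> simp [lam3]⟩
  rintro _ ⟨v, hv, rfl⟩
  have hdvd (i j : Fin 3) : (2 : ℤ) ∣ -(v i + v j) := by
    have := hv i j
    unfold Int.ModEq at this
    omega
  obtain ⟨a, ha⟩ := hdvd 1 2
  obtain ⟨b, hb⟩ := hdvd 0 2
  obtain ⟨c, hc⟩ := hdvd 0 1
  have hcomb : sqrtTwoSMulCast (Fin 3) v = a • lam1 + b • lam2 + c • lam3 := by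
    have ha' : (-(v 1 + v 2) : ℝ) = 2 * a := by exact_mod_cast ha
    have hb' : (-(v 0 + v 2) : ℝ) = 2 * b := by exact_mod_cast hb
    have hc' : (-(v 0 + v 1) : ℝ) = 2 * c := by exact_mod_cast hc
    ext i
    fin_cases i <;> simp [lam1, lam2, lam3]
    · linear_combination (Real.sqrt 2 / 2) * (ha' - hb' - hc')
    · linear_combination (Real.sqrt 2 / 2) * (hb' - ha' - hc')
    · linear_combination (Real.sqrt 2 / 2) * (hc' - ha' - hb')
  have hgen : {lam1, lam2, lam3} ⊆ (Lambda : Set (EuclideanSpace ℝ (Fin 3))) :=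
    AddSubgroup.subset_closure
  rw [hcomb]
  exact add_mem (add_mem (zsmul_mem (hgen (by simp)) a) (zsmul_mem (hgen (by simp)) b))
    (zsmul_mem (hgen (by simp)) c)

/-- The Voronoi cell of the lattice Λ at the origin equals the truncated octahedron
`{x : |x1| ≤ √2, |x2| ≤ √2, |x3| ≤ √2, |x1|+|x2|+|x3| ≤ 3√2/2}`. -/
theorem voronoi_cell_eq_truncated_octahedron :
    {x : EuclideanSpace ℝ (Fin 3) | ∀ l ∈ Lambda, ‖x‖ ≤ ‖x - l‖} =
      {x : EuclideanSpace ℝ (Fin 3) |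
        |x 0| ≤ Real.sqrt 2 ∧ |x 1| ≤ Real.sqrt 2 ∧ |x 2| ≤ Real.sqrt 2 ∧
        |x 0| + |x 1| + |x 2| ≤ 3 * Real.sqrt 2 / 2} := by
  ext x
  simp only [Set.mem_ofPred_eq, Lambda_eq_map_sameParityLattice, AddSubgroup.mem_map,
    forall_exists_index, and_imp, forall_apply_eq_imp_iff₂,
    norm_le_norm_sub_sqrtTwoSMulCast_iff]
  rw [forall_sum_mul_le_sum_sq_iff (fun i => Real.sqrt 2 * x i)]
  simp [Fin.forall_fin_succ, Fin.sum_univ_three, abs_mul, abs_of_pos (Real.sqrt_pos.2 two_pos),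
    ← mul_add, sqrt_two_mul_le_iff, and_assoc]

end
end

section
/- The translates of the truncated octahedron K by the lattice Λ tile ℝ³: the union ⋃_{λ∈Λ} (λ + K) equals all of ℝ³, and for distinct λ, μ ∈ Λ the interiors of λ + K and μ + K are disjoint. -/
/-!
Up to the factor `√2`, `Λ` is the body-centred cubic lattice of integer points whose coordinates
all have the same parity, and `K` is the cell `{y | ∀ i, |yᵢ| ≤ 1, ∑ |yᵢ| ≤ 3/2}`; the argument
works verbatim in any dimension `d`, with `d/2` in place of `3/2`.

Covering: in each coordinate the nearest even and the nearest odd integer lie at distances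
summing to `1`, so the two ℓ¹-distances to the all-even and the all-odd candidate sum to `d` and
one of them is at most `d/2`. Disjointness: on the interior of the cell all the inequalities are
strict, so the difference `n` of two lattice points whose translates' interiors meet satisfies
`|nᵢ| < 2` and `∑ |nᵢ| < d`. All coordinates even then forces `n = 0`, while all coordinates
odd would give `∑ |nᵢ| ≥ d`.
-/

noncomputable section

open Pointwise

/-- The truncated octahedron (Kelvin polyhedron). -/
def K : Set (EuclideanSpace ℝ (Fin 3)) :=
  {x | |x 0| ≤ Real.sqrt 2 ∧ |x 1| ≤ Real.sqrt 2 ∧ |x 2| ≤ Real.sqrt 2 ∧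
       |x 0| + |x 1| + |x 2| ≤ 3 * Real.sqrt 2 / 2}

def IsTiling {E : Type*} [TopologicalSpace E] [Add E] (L P : Set E) : Prop :=
  (⋃ l ∈ L, l +ᵥ P) = Set.univ ∧
    ∀ l ∈ L, ∀ m ∈ L, l ≠ m → Disjoint (interior (l +ᵥ P)) (interior (m +ᵥ P))

theorem IsTiling.image {E F : Type*} [TopologicalSpace E] [Add E] [TopologicalSpace F] [Add F]
    {L P : Set E} (h : IsTiling L P) (e : E ≃ₜ+ F) : IsTiling (e '' L) (e '' P) := by
  have image_translate (l : E) : e l +ᵥ e '' P = e '' (l +ᵥ P) :=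
    (Set.image_vadd_distrib e l P).symm
  have image_interior (s : Set E) : interior (e '' s) = e '' interior s :=
    (e.toHomeomorph.image_interior s).symm
  refine ⟨?_, ?_⟩
  · rw [Set.biUnion_image]
    simp_rw [image_translate, ← Set.image_iUnion₂, h.1,
      Set.image_univ_of_surjective e.surjective]
  · rintro _ ⟨l, hl, rfl⟩ _ ⟨m, hm, rfl⟩ hlm
    rw [image_translate, image_translate, image_interior, image_interior]
    exact (Set.disjoint_image_iff e.injective).mpr (h.2 l hl m hm (ne_of_apply_ne e hlm))

theorem homogeneous_lt_of_mem_interior {E : Type*} [TopologicalSpace E] [MulAction ℝ E]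
    [ContinuousSMul ℝ E] {S : Set E} {f : E → ℝ} {c : ℝ} (hc : 0 < c)
    (hf : ∀ (t : ℝ) (x : E), 0 ≤ t → f (t • x) = t * f x) (hS : ∀ x ∈ S, f x ≤ c)
    {z : E} (hz : z ∈ interior S) : f z < c := by
  have h_near_one : ∀ᶠ t in nhds (1 : ℝ), t • z ∈ S := by
    have hcont : Continuous fun t : ℝ => t • z := continuous_id.smul continuous_const
    refine hcont.continuousAt.eventually_mem ?_
    rw [one_smul]
    exact mem_interior_iff_mem_nhds.mp hz
  obtain ⟨t, htS, ht⟩ :=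
    ((h_near_one.filter_mono nhdsWithin_le_nhds).and self_mem_nhdsWithin).exists
      (f := nhdsWithin 1 (Set.Ioi 1))
  have hle := hS _ htS
  rw [hf t z (by linarith)] at hle
  by_contra! hge
  nlinarith

def bccLattice (ι : Type*) : AddSubgroup (ι → ℤ) where
  carrier := {n | ∀ i j, n i ≡ n j [ZMOD 2]}
  add_mem' ha hb i j := (ha i j).add (hb i j)
  zero_mem' _ _ := rfl
  neg_mem' ha i j := (ha i j).neg

theorem mem_bccLattice_of_forall_modEq {ι : Type*} {n : ι → ℤ} (r : ℤ)
    (h : ∀ i, n i ≡ r [ZMOD 2]) : n ∈ bccLattice ι :=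
  fun i j => (h i).trans (h j).symm

def bccCell (ι : Type*) [Fintype ι] : Set (ι → ℝ) :=
  {y | (∀ i, |y i| ≤ 1) ∧ ∑ i, |y i| ≤ Fintype.card ι / 2}

theorem exists_even_odd_abs_sub_add_abs_sub_eq_one (t : ℝ) :
    ∃ a b : ℤ, Even a ∧ Odd b ∧ |t - a| + |t - b| = 1 := by
  have h_floor : |t - ⌊t⌋| + |t - (⌊t⌋ + 1 : ℤ)| = 1 := by
    have h0 := Int.floor_le t
    have h1 := Int.lt_floor_add_one t
    push_cast
    rw [abs_of_nonneg (by linarith), abs_of_neg (by linarith)]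
    ring
  rcases Int.even_or_odd ⌊t⌋ with h | h
  · exact ⟨_, _, h, h.add_one, h_floor⟩
  · exact ⟨_, _, h.add_one, h, by rw [add_comm]; exact h_floor⟩

theorem exists_mem_bccLattice_sub_mem_bccCell {ι : Type*} [Fintype ι] (y : ι → ℝ) :
    ∃ n ∈ bccLattice ι, y - (fun i => (n i : ℝ)) ∈ bccCell ι := by
  choose a b ha hb hab using fun i => exists_even_odd_abs_sub_add_abs_sub_eq_one (y i)
  have h_total : ∑ i, |y i - a i| + ∑ i, |y i - b i| = Fintype.card ι := by
    simp [← Finset.sum_add_distrib, hab]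
  have mem_cell (n : ι → ℤ) (hn : ∀ i, |y i - n i| ≤ 1)
      (hsum : ∑ i, |y i - n i| ≤ Fintype.card ι / 2) : y - (fun i => (n i : ℝ)) ∈ bccCell ι :=
    ⟨hn, hsum⟩
  by_cases h_even : ∑ i, |y i - a i| ≤ Fintype.card ι / 2
  · exact ⟨a, mem_bccLattice_of_forall_modEq 0 fun i => Int.even_iff.mp (ha i),
      mem_cell a (fun i => by linarith [hab i, abs_nonneg (y i - b i)]) h_even⟩
  · exact ⟨b, mem_bccLattice_of_forall_modEq 1 fun i => Int.odd_iff.mp (hb i),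
      mem_cell b (fun i => by linarith [hab i, abs_nonneg (y i - a i)]) (by linarith)⟩

theorem eq_zero_of_mem_bccLattice {ι : Type*} [Fintype ι] {n : ι → ℤ} (hn : n ∈ bccLattice ι)
    (h_lt_two : ∀ i, |n i| < 2) (h_sum : ∑ i, |n i| < Fintype.card ι) : n = 0 := by
  funext i
  rw [Pi.zero_apply]
  by_contra hi
  have h_one_le (j : ι) : 1 ≤ |n j| := by
    have h_mod := hn i j
    have := abs_lt.mp (h_lt_two i)
    unfold Int.ModEq at h_mod
    exact Int.one_le_abs (by omega)
  have := Finset.sum_le_sum fun j (_ : j ∈ Finset.univ) => h_one_le j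
  simp only [Finset.sum_const, Finset.card_univ, Int.nsmul_eq_mul, mul_one] at this
  omega

theorem abs_lt_of_mem_interior_bccCell {ι : Type*} [Fintype ι] [Nonempty ι] {y : ι → ℝ}
    (hy : y ∈ interior (bccCell ι)) :
    (∀ i, |y i| < 1) ∧ ∑ i, |y i| < Fintype.card ι / 2 := by
  refine ⟨fun i => ?_, ?_⟩
  · refine homogeneous_lt_of_mem_interior (f := fun y => |y i|) one_pos (fun t x ht => ?_)
      (fun x hx => hx.1 i) hy
    simp [abs_mul, abs_of_nonneg ht]
  · refine homogeneous_lt_of_mem_interior (f := fun y => ∑ i, |y i|)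
      (by have := Fintype.card_pos (α := ι); positivity) (fun t x ht => ?_)
      (fun x hx => hx.2) hy
    simp [abs_mul, abs_of_nonneg ht, Finset.mul_sum]

theorem isTiling_bccCell (ι : Type*) [Fintype ι] [Nonempty ι] :
    IsTiling ((bccLattice ι).map (AddMonoidHom.compLeft (Int.castAddHom ℝ) ι)) (bccCell ι) := by
  refine ⟨Set.eq_univ_of_forall fun y => ?_, ?_⟩
  · obtain ⟨n, hn, hy⟩ := exists_mem_bccLattice_sub_mem_bccCell y
    refine Set.mem_iUnion₂.mpr ⟨_, AddSubgroup.mem_map_of_mem _ hn, ?_⟩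
    rwa [Set.mem_vadd_set_iff_neg_vadd_mem, vadd_eq_add, neg_add_eq_sub]
  · intro l hl m hm hlm
    refine Set.disjoint_left.mpr fun z hzl hzm => hlm ?_
    rw [interior_vadd, Set.mem_vadd_set_iff_neg_vadd_mem, vadd_eq_add] at hzl hzm
    obtain ⟨hl_coord, hl_sum⟩ := abs_lt_of_mem_interior_bccCell hzl
    obtain ⟨hm_coord, hm_sum⟩ := abs_lt_of_mem_interior_bccCell hzm
    obtain ⟨n, hn, hnlm⟩ := AddSubgroup.mem_map.mp (sub_mem hl hm)
    have h_abs_le (i : ι) : |(n i : ℝ)| ≤ |(-m + z) i| + |(-l + z) i| := by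
      have h_eq : (n i : ℝ) = (-m + z) i - (-l + z) i := by
        have : (n i : ℝ) = l i - m i := by simpa using congrFun hnlm i
        simp only [Pi.add_apply, Pi.neg_apply]
        linarith
      exact h_eq ▸ abs_sub _ _
    have h_lt_two (i : ι) : |n i| < 2 := by
      have := h_abs_le i
      have := hl_coord i
      have := hm_coord i
      exact_mod_cast (by linarith : |(n i : ℝ)| < 2)
    have h_sum : ∑ i, |n i| < Fintype.card ι := by
      have := Finset.sum_le_sum fun i (_ : i ∈ Finset.univ) => h_abs_le i
      rw [Finset.sum_add_distrib] at this
      exact_mod_cast (by linarith : ∑ i, |(n i : ℝ)| < Fintype.card ι)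
    have h_zero := eq_zero_of_mem_bccLattice hn h_lt_two h_sum
    rw [h_zero, map_zero] at hnlm
    exact sub_eq_zero.mp hnlm.symm

def sqrtTwoSMulToLp (ι : Type*) [Fintype ι] : (ι → ℝ) ≃ₜ+ EuclideanSpace ℝ ι :=
  ((EuclideanSpace.equiv ι ℝ).symm.trans
      (ContinuousLinearEquiv.smulLeft (Units.mk0 (Real.sqrt 2) (by positivity)))
    ).toContinuousAddEquiv

theorem sqrtTwoSMulToLp_apply {ι : Type*} [Fintype ι] (y : ι → ℝ) :
    sqrtTwoSMulToLp ι y = Real.sqrt 2 • WithLp.toLp 2 y :=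
  rfl

theorem bccLattice_fin_three :
    bccLattice (Fin 3) = AddSubgroup.closure {![1, -1, -1], ![-1, 1, -1], ![-1, -1, 1]} := by
  refine le_antisymm (fun n hn => ?_) ((AddSubgroup.closure_le _).mpr ?_)
  · have h01 := hn 0 1
    have h02 := hn 0 2
    unfold Int.ModEq at h01 h02
    have h_comb : n = (-(n 1 + n 2) / 2) • ![1, -1, -1] + (-(n 0 + n 2) / 2) • ![-1, 1, -1]
        + (-(n 0 + n 1) / 2) • ![-1, -1, 1] := by
      funext i
      fin_cases i <;> simp <;> omega
    rw [h_comb]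
    refine add_mem (add_mem ?_ ?_) ?_ <;>
      exact AddSubgroup.zsmul_mem _ (AddSubgroup.subset_closure (by simp)) _
  · rintro v (rfl | rfl | rfl) <;> intro i j <;> fin_cases i <;> fin_cases j <;> decide

theorem Lambda_eq_image :
    (Lambda : Set (EuclideanSpace ℝ (Fin 3))) = sqrtTwoSMulToLp (Fin 3) ''
      ((bccLattice (Fin 3)).map (AddMonoidHom.compLeft (Int.castAddHom ℝ) (Fin 3))) := by
  have h : Lambda =
      ((bccLattice (Fin 3)).map (AddMonoidHom.compLeft (Int.castAddHom ℝ) (Fin 3))).map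
        (sqrtTwoSMulToLp (Fin 3) : (Fin 3 → ℝ) →+ EuclideanSpace ℝ (Fin 3)) := by
    rw [bccLattice_fin_three, AddMonoidHom.map_closure, AddMonoidHom.map_closure, Set.image_image]
    simp only [Set.image_insert_eq, Set.image_singleton]
    unfold Lambda
    congr <;> ext i <;> fin_cases i <;> simp [lam1, lam2, lam3, sqrtTwoSMulToLp_apply]
  rw [h, AddSubgroup.coe_map]
  rfl

theorem K_eq_image : K = sqrtTwoSMulToLp (Fin 3) '' bccCell (Fin 3) := by
  have h : sqrtTwoSMulToLp (Fin 3) ⁻¹' K = bccCell (Fin 3) := by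
    ext y
    have hs : (0 : ℝ) < Real.sqrt 2 := by positivity
    have h_rhs : 3 * Real.sqrt 2 / 2 = Real.sqrt 2 * (3 / 2) := by ring
    simp [K, bccCell, sqrtTwoSMulToLp_apply, Fin.forall_fin_succ, Fin.sum_univ_three, abs_mul,
      abs_of_pos hs, ← mul_add, h_rhs, mul_le_iff_le_one_right hs, mul_le_mul_iff_right₀ hs,
      and_assoc]
  rw [← h, Set.image_preimage_eq _ (sqrtTwoSMulToLp (Fin 3)).surjective]

/-- The translates of the truncated octahedron `K` by the lattice Λ tile ℝ³:
their union is all of ℝ³ and distinct translates have disjoint interiors. -/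
theorem kelvin_polyhedron_tiles_space :
    (⋃ l ∈ (Lambda : Set (EuclideanSpace ℝ (Fin 3))), l +ᵥ K) = Set.univ ∧
    (∀ l ∈ Lambda, ∀ m ∈ Lambda, l ≠ m →
      interior (l +ᵥ K) ∩ interior (m +ᵥ K) = ∅) := by
  have h := (isTiling_bccCell (Fin 3)).image (sqrtTwoSMulToLp (Fin 3))
  rw [← Lambda_eq_image, ← K_eq_image] at h
  exact ⟨h.1, fun l hl m hm hlm => (h.2 l hl m hm hlm).inter_eq⟩

end
end
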